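/- arXiv:1611.07880 — 3 statements merged into one kernel-verified Lean document; each statement's English description precedes it below -/
import Mathlib

section
/- Let G be a group with subgroups H and K of finite indices n = [G:H] and m = [G:K]. Then the number of (H,K)-double cosets in G is at most gcd(n, m). -/
/-!
The `(H, K)`-double cosets are the `H`-orbits on `G ⧸ K`. The orbit of `gK` has size
`a = [H : H ⊓ gKg⁻¹]`, and `a * n = [G : H ⊓ gKg⁻¹]` is a multiple of `[G : gKg⁻¹] = m`, so
`m / gcd n m` divides `a`. Since these orbits partition the `m` points of `G ⧸ K`, there are at
most `gcd n m` of them.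
-/

open MulAction

theorem Nat.div_gcd_dvd_of_dvd_mul {a m n : ℕ} (hm : m ≠ 0) (h : m ∣ a * n) :
    m / n.gcd m ∣ a := by
  rw [Nat.div_dvd_iff_dvd_mul (Nat.gcd_dvd_right n m) (Nat.gcd_pos_of_pos_right n
    (Nat.pos_of_ne_zero hm)), mul_comm, ← Nat.gcd_mul_left]
  exact Nat.dvd_gcd h (dvd_mul_left m a)

theorem Subgroup.index_dvd_relIndex_mul_index {G : Type*} [Group G] (L H : Subgroup G) :
    L.index ∣ L.relIndex H * H.index := by
  rw [← inf_relIndex_right, relIndex_mul_index inf_le_right]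
  exact index_dvd_of_le inf_le_left

namespace MulAction

variable {G X : Type*} [Group G] [MulAction G X]

theorem card_dvd_ncard_orbit_subgroup_mul_index [IsPretransitive G X] (H : Subgroup G) (x : X) :
    Nat.card X ∣ (orbit H x).ncard * H.index := by
  have hstab : stabilizer H x = (stabilizer G x).subgroupOf H := rfl
  rw [← index_stabilizer, hstab, ← Subgroup.relIndex, ← index_stabilizer_of_transitive G x]
  exact Subgroup.index_dvd_relIndex_mul_index _ _

theorem card_orbitRel_quotient_mul_le [Finite X] {k : ℕ} (hk : ∀ x : X, k ∣ (orbit G x).ncard) :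
    Nat.card (orbitRel.Quotient G X) * k ≤ Nat.card X := by
  have := Fintype.ofFinite (orbitRel.Quotient G X)
  rw [Nat.card_congr (selfEquivSigmaOrbits G X), Nat.card_sigma, Nat.card_eq_fintype_card,
    ← smul_eq_mul, ← Finset.card_univ, ← Finset.sum_const]
  refine Finset.sum_le_sum fun ω _ => ?_
  rw [Nat.card_coe_set_eq]
  exact Nat.le_of_dvd ((Set.ncard_pos).mpr (nonempty_orbit _)) (hk _)

theorem card_orbitRel_quotient_subgroup_le_gcd [IsPretransitive G X] [Finite X] [Nonempty X]
    (H : Subgroup G) : Nat.card (orbitRel.Quotient H X) ≤ H.index.gcd (Nat.card X) := by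
  have hm : 0 < Nat.card X := Nat.card_pos
  have hd : H.index.gcd (Nat.card X) ∣ Nat.card X := Nat.gcd_dvd_right _ _
  refine Nat.le_of_mul_le_mul_right ?_
    (Nat.div_pos (Nat.le_of_dvd hm hd) (Nat.gcd_pos_of_pos_right _ hm))
  rw [Nat.mul_div_cancel' hd]
  exact card_orbitRel_quotient_mul_le fun x =>
    Nat.div_gcd_dvd_of_dvd_mul hm.ne' (card_dvd_ncard_orbit_subgroup_mul_index H x)

end MulAction

namespace DoubleCoset

variable {G : Type*} [Group G]

theorem rel_iff_orbitRel {H K : Subgroup G} {a b : G} :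
    setoid H K a b ↔ orbitRel H (G ⧸ K) (a : G ⧸ K) (b : G ⧸ K) := by
  rw [rel_iff, orbitRel_apply, mem_orbit_iff]
  constructor
  · rintro ⟨h, hh, k, hk, rfl⟩
    exact ⟨⟨h⁻¹, H.inv_mem hh⟩, QuotientGroup.eq.mpr (by simpa [mul_assoc] using K.inv_mem hk)⟩
  · rintro ⟨⟨h, hh⟩, hb⟩
    exact ⟨h⁻¹, H.inv_mem hh, ((h * b)⁻¹ * a)⁻¹, K.inv_mem (QuotientGroup.eq.mp hb), by group⟩

noncomputable def equivOrbitRelQuotient (H K : Subgroup G) :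
    Quotient (H : Set G) K ≃ orbitRel.Quotient H (G ⧸ K) :=
  (_root_.Quotient.congr (Equiv.refl G) fun _ _ =>
      rel_iff_orbitRel.trans (Quotient.eq (r := orbitRel H (G ⧸ K))).symm).trans
    (Setoid.quotientKerEquivOfSurjective _
      (Quotient.mk''_surjective.comp QuotientGroup.mk_surjective))

end DoubleCoset

theorem stmt_3_general {G : Type*} [Group G] (H K : Subgroup G) [K.FiniteIndex] :
    Nat.card (DoubleCoset.Quotient (H : Set G) (K : Set G)) ≤ Nat.gcd H.index K.index := by
  have : Finite (G ⧸ K) := K.finite_quotient_of_finiteIndex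
  rw [Nat.card_congr (DoubleCoset.equivOrbitRelQuotient H K), K.index_eq_card]
  exact card_orbitRel_quotient_subgroup_le_gcd H

theorem stmt_3 {G : Type*} [Group G] (H K : Subgroup G) [H.FiniteIndex] [K.FiniteIndex] :
    Nat.card (DoubleCoset.Quotient (H : Set G) (K : Set G)) ≤ Nat.gcd H.index K.index :=
  stmt_3_general H K
end

section
/- The polynomial Xⁿ − Yᵐ in ℂ[X,Y] is irreducible whenever n, m are positive integers with gcd(n, m) = 1. -/
open Polynomial

lemma aux_no_pow_root {p m : ℕ} (hp : p.Prime) (hpm : ¬ p ∣ m)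
    (b : FractionRing (Polynomial ℂ)) :
    b ^ p ≠ algebraMap (Polynomial ℂ) _ ((Polynomial.X : Polynomial ℂ) ^ m) := by
  intro hb
  obtain ⟨f, g, hg, rfl⟩ := IsFractionRing.div_surjective (A := Polynomial ℂ) b
  have hg0 : g ≠ 0 := nonZeroDivisors.ne_zero hg
  have hgK : algebraMap (Polynomial ℂ) (FractionRing (Polynomial ℂ)) g ≠ 0 :=
    (map_ne_zero_iff _ (IsFractionRing.injective (Polynomial ℂ)
      (FractionRing (Polynomial ℂ)))).mpr hg0
  have key : f ^ p = Polynomial.X ^ m * g ^ p := by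
    apply IsFractionRing.injective (Polynomial ℂ) (FractionRing (Polynomial ℂ))
    rw [map_pow, map_mul, map_pow, map_pow]
    rw [div_pow, div_eq_iff (pow_ne_zero _ hgK)] at hb
    rw [hb, map_pow]
  have hf0 : f ≠ 0 := by
    intro h
    apply hg0
    have h2 := key
    rw [h, zero_pow hp.ne_zero] at h2
    have hx : (Polynomial.X : Polynomial ℂ) ^ m ≠ 0 := pow_ne_zero _ X_ne_zero
    rcases mul_eq_zero.mp h2.symm with h' | h'
    · exact absurd h' hx
    · exact pow_eq_zero_iff hp.ne_zero |>.mp h'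
  have hdeg : p * f.natDegree = m + p * g.natDegree := by
    have := congrArg Polynomial.natDegree key
    rwa [Polynomial.natDegree_pow, Polynomial.natDegree_mul (pow_ne_zero _ X_ne_zero)
      (pow_ne_zero _ hg0), Polynomial.natDegree_X_pow, Polynomial.natDegree_pow] at this
  apply hpm
  have : (p : ℤ) ∣ (m : ℤ) := ⟨(f.natDegree : ℤ) - g.natDegree, by
    have h : (p : ℤ) * f.natDegree = m + p * g.natDegree := by exact_mod_cast hdeg
    linear_combination -h⟩
  exact_mod_cast this

lemma aux_irr_poly {n m : ℕ} (hn : Odd n) (hm : 0 < m) (hcop : Nat.gcd n m = 1) :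
    Irreducible ((Polynomial.X : Polynomial (Polynomial ℂ)) ^ n
      - Polynomial.C ((Polynomial.X : Polynomial ℂ) ^ m)) := by
  have hn0 : n ≠ 0 := by rintro rfl; simpa using hn
  have hmonic : ((Polynomial.X : Polynomial (Polynomial ℂ)) ^ n
      - Polynomial.C ((Polynomial.X : Polynomial ℂ) ^ m)).Monic :=
    Polynomial.monic_X_pow_sub_C _ hn0
  rw [hmonic.irreducible_iff_irreducible_map_fraction_map (K := FractionRing (Polynomial ℂ))]
  rw [Polynomial.map_sub, Polynomial.map_pow, Polynomial.map_X, Polynomial.map_C]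
  apply X_pow_sub_C_irreducible_of_odd hn
  intro q hq hqn b
  apply aux_no_pow_root hq
  intro hqm
  have hd : q ∣ Nat.gcd n m := Nat.dvd_gcd hqn hqm
  rw [hcop] at hd
  exact hq.one_lt.ne' (Nat.dvd_one.mp hd)

lemma aux_irr_mv {n m : ℕ} (hn : Odd n) (hm : 0 < m) (hcop : Nat.gcd n m = 1) :
    Irreducible ((MvPolynomial.X 0) ^ n - (MvPolynomial.X 1) ^ m :
      MvPolynomial (Fin 2) ℂ) := by
  let e1 := MvPolynomial.finSuccEquiv ℂ 1
  let e2 : MvPolynomial (Fin 1) ℂ ≃ₐ[ℂ] Polynomial ℂ :=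
    (MvPolynomial.finSuccEquiv ℂ 0).trans
      (Polynomial.mapAlgEquiv (MvPolynomial.isEmptyAlgEquiv ℂ (Fin 0)))
  let e : MvPolynomial (Fin 2) ℂ ≃ₐ[ℂ] Polynomial (Polynomial ℂ) :=
    e1.trans (Polynomial.mapAlgEquiv e2)
  rw [← MulEquiv.irreducible_iff e.toMulEquiv]
  have he2 : e2 (MvPolynomial.X 0) = Polynomial.X := by
    show (Polynomial.mapAlgEquiv (MvPolynomial.isEmptyAlgEquiv ℂ (Fin 0)))
      ((MvPolynomial.finSuccEquiv ℂ 0) (MvPolynomial.X 0)) = _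
    rw [MvPolynomial.finSuccEquiv_X_zero]
    simp [Polynomial.mapAlgEquiv]
  have h0 : e (MvPolynomial.X 0) = Polynomial.X := by
    show (Polynomial.mapAlgEquiv e2) (e1 (MvPolynomial.X 0)) = _
    rw [show e1 (MvPolynomial.X 0) = Polynomial.X from MvPolynomial.finSuccEquiv_X_zero]
    simp [Polynomial.mapAlgEquiv]
  have h1 : e (MvPolynomial.X 1) = Polynomial.C Polynomial.X := by
    show (Polynomial.mapAlgEquiv e2) (e1 (MvPolynomial.X 1)) = _
    rw [show (1 : Fin 2) = (0 : Fin 1).succ from rfl]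
    rw [show e1 (MvPolynomial.X (0 : Fin 1).succ) = Polynomial.C (MvPolynomial.X 0) from
      MvPolynomial.finSuccEquiv_X_succ]
    simp [Polynomial.mapAlgEquiv, he2]
  have hmap : e ((MvPolynomial.X 0) ^ n - (MvPolynomial.X 1) ^ m) =
      Polynomial.X ^ n - Polynomial.C ((Polynomial.X : Polynomial ℂ) ^ m) := by
    rw [map_sub, map_pow, map_pow, h0, h1, ← Polynomial.C_pow]
  show Irreducible (e ((MvPolynomial.X 0) ^ n - (MvPolynomial.X 1) ^ m))
  rw [hmap]
  exact aux_irr_poly hn hm hcop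

theorem stmt_11 (n m : ℕ) (hn : 0 < n) (hm : 0 < m) (hcop : Nat.gcd n m = 1) :
    Irreducible ((MvPolynomial.X 0) ^ n - (MvPolynomial.X 1) ^ m :
      MvPolynomial (Fin 2) ℂ) := by
  rcases Nat.even_or_odd n with heven | hodd
  swap
  · exact aux_irr_mv hodd hm hcop
  · have hmodd : Odd m := by
      rcases Nat.even_or_odd m with h | h
      swap
      · exact h
      · exfalso
        have hd : 2 ∣ Nat.gcd n m := Nat.dvd_gcd heven.two_dvd h.two_dvd
        rw [hcop] at hd
        omega
    have base : Irreducible ((MvPolynomial.X 0) ^ m - (MvPolynomial.X 1) ^ n :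
        MvPolynomial (Fin 2) ℂ) :=
      aux_irr_mv hmodd hn (by rwa [Nat.gcd_comm])
    let s := MvPolynomial.renameEquiv ℂ (Equiv.swap (0 : Fin 2) 1)
    rw [← MulEquiv.irreducible_iff s.toMulEquiv]
    have hs : s ((MvPolynomial.X 0) ^ n - (MvPolynomial.X 1) ^ m :
        MvPolynomial (Fin 2) ℂ) =
        (MvPolynomial.X 1) ^ n - (MvPolynomial.X 0) ^ m := by
      show MvPolynomial.rename (Equiv.swap (0 : Fin 2) 1) _ = _
      rw [map_sub, map_pow, map_pow, MvPolynomial.rename_X, MvPolynomial.rename_X,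
        Equiv.swap_apply_left, Equiv.swap_apply_right]
    show Irreducible (s ((MvPolynomial.X 0) ^ n - (MvPolynomial.X 1) ^ m))
    rw [hs]
    have hassoc : Associated ((MvPolynomial.X 0) ^ m - (MvPolynomial.X 1) ^ n :
        MvPolynomial (Fin 2) ℂ) ((MvPolynomial.X 1) ^ n - (MvPolynomial.X 0) ^ m) :=
      ⟨-1, by simp⟩
    exact hassoc.irreducible base
end

section
/- Let β₁(z) = 4z³(1−z³) and β₂(w) = −27w⁴(w²−1)/4 as rational maps ℂ → ℂ, both of degree 6, so that β₁(z) = β₂(w) is equivalent to F(z,w) = 0. Then the polynomial F(z,w) = 16z³(1−z³) + 27w⁴(w²−1) ∈ ℂ[z,w] is irreducible. -/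
open Polynomial

noncomputable section
namespace Stmt19Aux
abbrev L := RatFunc ℂ
abbrev aM : Polynomial ℂ →+* L := algebraMap (Polynomial ℂ) L

lemma aM_ne {p : Polynomial ℂ} (h : p ≠ 0) : aM p ≠ 0 := RatFunc.algebraMap_ne_zero h

lemma ne_zero_of_eval {p : Polynomial ℂ} {c : ℂ} (h : p.eval c ≠ 0) : p ≠ 0 := by
  rintro rfl; simp at h

-- the three rational functions
def w₀ : L := aM (2*X) / aM (3 - X^2)
def u₁ : L := aM (X^4*(9 - X^2)) / aM ((3 - X^2)^3)
def u₂ : L := aM (27*(1 - X^2)) / aM ((3 - X^2)^3)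

lemma hb : (3 - X^2 : Polynomial ℂ) ≠ 0 := ne_zero_of_eval (c := 0) (by norm_num)
lemma hQ : ((3 - X^2 : Polynomial ℂ)^3) ≠ 0 := pow_ne_zero _ hb

lemma hsum : u₁ + u₂ = 1 := by
  rw [u₁, u₂, ← add_div, ← map_add]
  rw [show (X^4*(9 - X^2) + 27*(1 - X^2) : Polynomial ℂ) = (3 - X^2)^3 by ring]
  exact div_self (aM_ne hQ)

lemma frac_calc {F : Type*} [Field F] (A B : F) (hB : B ≠ 0) :
    27*(A/B)^4*((A/B)^2 - 1) = (27*A^4*(A^2-B^2))/B^6 := by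
  rw [div_pow, div_pow, div_sub_one (pow_ne_zero 2 hB), mul_div_assoc', mul_div_assoc', div_mul_eq_mul_div, div_div, ← pow_add]

lemma hprod : (27:L) * w₀^4 * (w₀^2 - 1) = -16 * (u₁ * u₂) := by
  rw [w₀, frac_calc _ _ (aM_ne hb), u₁, u₂, div_mul_div_comm, ← mul_div_assoc]
  rw [div_eq_div_iff (pow_ne_zero 6 (aM_ne hb)) (mul_ne_zero (aM_ne hQ) (aM_ne hQ))]
  simp only [← map_ofNat (f := aM), ← map_pow, ← map_mul, ← map_sub, ← map_neg]
  exact congrArg aM (by ring)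
lemma hX3 : (3:L) - RatFunc.X^2 ≠ 0 := by
  have := aM_ne hb
  simpa [map_ofNat] using this

lemma aM_inj {p q : Polynomial ℂ} (h : aM p = aM q) : p = q := RatFunc.algebraMap_injective ℂ h

lemma u₁_ne_u₂ : u₁ ≠ u₂ := by
  intro h
  rw [u₁, u₂, div_eq_div_iff (aM_ne hQ) (aM_ne hQ), ← map_mul, ← map_mul] at h
  have h2 := congrArg (Polynomial.eval 0) (aM_inj h)
  simp at h2

-- injectivity of evaluation at a non-constant point
lemma aeval_inj {c : L} (h : ∀ r : ℂ, c ≠ algebraMap ℂ L r) :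
    Function.Injective (Polynomial.aeval (R := ℂ) c : Polynomial ℂ →ₐ[ℂ] L) := by
  rw [injective_iff_map_eq_zero]
  intro p hp
  by_contra hp0
  have hsp : p.Splits := IsAlgClosed.splits p
  have hev := hp
  rw [hsp.eq_prod_roots] at hev
  rw [map_mul, aeval_C, map_multiset_prod, Multiset.map_map] at hev
  rcases mul_eq_zero.mp hev with h1 | h1
  · exact leadingCoeff_ne_zero.mpr hp0 ((_root_.map_eq_zero _).mp h1)
  · have h2 := Multiset.prod_eq_zero_iff.mp h1
    obtain ⟨a, _, ha⟩ := Multiset.mem_map.mp h2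
    simp only [Function.comp_apply, map_sub, aeval_X, aeval_C] at ha
    exact h a (by rw [← sub_eq_zero]; exact ha)

def v : L := -3 / aM X

lemma hw_nc : ∀ r : ℂ, w₀ ≠ algebraMap ℂ L r := by
  intro r h
  rw [w₀, div_eq_iff (aM_ne hb)] at h
  have h0 : algebraMap ℂ L r = aM (C r) := by simp
  rw [h0, ← map_mul] at h
  have h' := aM_inj h
  have e0 := congrArg (Polynomial.eval 0) h'
  have e1 := congrArg (Polynomial.eval 1) h'
  simp at e0 e1
  rw [e0] at e1; norm_num at e1

lemma hv_nc : ∀ r : ℂ, v ≠ algebraMap ℂ L r := by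
  intro r h
  rw [v, div_eq_iff (aM_ne X_ne_zero)] at h
  have h0 : algebraMap ℂ L r = aM (C r) := by simp
  have h3 : (-3 : L) = aM (-3) := by simp [map_ofNat]
  rw [h0, ← map_mul, h3] at h
  have e0 := congrArg (Polynomial.eval 0) (aM_inj h)
  simp at e0

def φ : L →+* L := IsFractionRing.lift (g := (Polynomial.aeval (R := ℂ) w₀).toRingHom) (aeval_inj hw_nc)
def σ : L →+* L := IsFractionRing.lift (g := (Polynomial.aeval (R := ℂ) v).toRingHom) (aeval_inj hv_nc)

lemma φ_aM (p : Polynomial ℂ) : φ (aM p) = Polynomial.aeval w₀ p :=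
  IsFractionRing.lift_algebraMap _ _

lemma σ_aM (p : Polynomial ℂ) : σ (aM p) = Polynomial.aeval v p :=
  IsFractionRing.lift_algebraMap _ _

lemma ht : (RatFunc.X : L) ≠ 0 := by
  have := aM_ne (X_ne_zero (R := ℂ)); rwa [RatFunc.algebraMap_X] at this

lemma h3v : (3:L) - v^2 ≠ 0 := by
  rw [v]; intro h
  rw [div_pow, sub_eq_zero, eq_div_iff (pow_ne_zero 2 (aM_ne X_ne_zero))] at h
  have h' : aM (3*X^2) = aM 9 := by
    rw [map_mul, map_pow, map_ofNat, map_ofNat]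
    rw [h]; norm_num
  have e0 := congrArg (Polynomial.eval 0) (aM_inj h')
  simp at e0

lemma hX3' : (3:L) - aM X^2 ≠ 0 := by rw [RatFunc.algebraMap_X]; exact hX3

lemma σ_w₀ : σ w₀ = w₀ := by
  rw [w₀, map_div₀, σ_aM, σ_aM]
  simp only [map_mul, map_sub, map_pow, aeval_X, map_ofNat]
  rw [div_eq_div_iff h3v hX3']
  simp only [map_mul, map_sub, map_pow, map_ofNat, RatFunc.algebraMap_X]
  rw [v, RatFunc.algebraMap_X]
  have h1 := ht
  field_simp
  ring

lemma σ_u₁ : σ u₁ = u₂ := by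
  rw [u₁, u₂, map_div₀, σ_aM, σ_aM]
  simp only [map_mul, map_sub, map_pow, map_one, aeval_X, map_ofNat]
  rw [div_eq_div_iff (pow_ne_zero 3 h3v) (pow_ne_zero 3 hX3')]
  simp only [map_mul, map_sub, map_pow, map_one, map_ofNat, RatFunc.algebraMap_X]
  rw [v, RatFunc.algebraMap_X]
  have h1 := ht
  field_simp
  ring

lemma φ_comp : φ.comp (aM) = (Polynomial.aeval (R := ℂ) w₀).toRingHom :=
  RingHom.ext fun p => φ_aM p

lemma σφ (x : L) : σ (φ x) = φ x := by
  have h : (σ.comp φ).comp (aM) = φ.comp (aM) := by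
    apply Polynomial.ringHom_ext
    · intro c
      simp only [RingHom.comp_apply]
      have hc : aM (C c) = algebraMap ℂ L c := by simp
      rw [φ_aM, aeval_C, ← hc, σ_aM, aeval_C]
      exact hc.symm
    · simp only [RingHom.comp_apply]
      rw [φ_aM, aeval_X, σ_w₀]
  have h2 : σ.comp φ = φ := IsLocalization.ringHom_ext (nonZeroDivisors (Polynomial ℂ)) h
  exact RingHom.congr_fun h2 x

lemma σ_u₂ : σ u₂ = u₁ := by
  have h2 : u₂ = 1 - u₁ := by rw [← hsum]; ring
  rw [h2, map_sub, map_one, σ_u₁, h2]; ring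

lemma u₁_not_range (k : L) : φ k ≠ u₁ := by
  intro h
  have h1 := σφ k
  rw [h, σ_u₁] at h1
  exact u₁_ne_u₂ h1.symm

lemma u₂_not_range (k : L) : φ k ≠ u₂ := by
  intro h
  have h1 := σφ k
  rw [h, σ_u₂] at h1
  exact u₁_ne_u₂ h1

lemma rm_pow (p : Polynomial ℂ) (hp : p ≠ 0) (a : ℂ) (k : ℕ) :
    rootMultiplicity a (p^k) = k * rootMultiplicity a p := by
  induction k with
  | zero => simp [rootMultiplicity_eq_zero]
  | succ n ih =>
      rw [pow_succ, rootMultiplicity_mul (mul_ne_zero (pow_ne_zero n hp) hp), ih]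
      ring

lemma noncube_aux (P : Polynomial ℂ) (a : ℂ) (hP : P ≠ 0)
    (hQa : Polynomial.eval a (((3:Polynomial ℂ) - X^2)^3) ≠ 0)
    (hrm : rootMultiplicity a P % 3 = 1) :
    ∀ q : L, q^3 ≠ aM P / aM ((3 - X^2)^3) := by
  intro q h
  have hd := RatFunc.denom_ne_zero q
  rw [← RatFunc.num_div_denom q, div_pow, div_eq_div_iff (pow_ne_zero _ (aM_ne hd)) (aM_ne hQ),
    ← map_pow, ← map_mul, ← map_pow, ← map_mul] at h
  have h' := aM_inj h
  have hn : q.num ≠ 0 := by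
    intro h0
    rw [h0, zero_pow (by norm_num : (3:ℕ) ≠ 0), zero_mul] at h'
    rcases mul_eq_zero.mp h'.symm with h1 | h1
    · exact hP h1
    · exact pow_ne_zero 3 hd h1
  have e := congrArg (rootMultiplicity a) h'
  rw [rootMultiplicity_mul (mul_ne_zero (pow_ne_zero 3 hn) hQ),
    rootMultiplicity_mul (mul_ne_zero hP (pow_ne_zero 3 hd)),
    rm_pow _ hn, rm_pow _ hd,
    rootMultiplicity_eq_zero (p := ((3:Polynomial ℂ) - X^2)^3) (by simp only [IsRoot]; exact hQa)] at e
  omega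

lemma u₁_noncube : ∀ q : L, q^3 ≠ u₁ := by
  rw [u₁]
  refine noncube_aux _ 0 (ne_zero_of_eval (c := 1) (by norm_num)) (by norm_num) ?_
  have h1 : ((9:Polynomial ℂ) - X^2) ≠ 0 := ne_zero_of_eval (c := 0) (by norm_num)
  rw [rootMultiplicity_mul (mul_ne_zero (pow_ne_zero 4 X_ne_zero) h1)]
  rw [show (X:Polynomial ℂ)^4 = (X - C 0)^4 by simp, rootMultiplicity_X_sub_C_pow,
    rootMultiplicity_eq_zero (by simp only [IsRoot]; norm_num)]

lemma u₂_noncube : ∀ q : L, q^3 ≠ u₂ := by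
  rw [u₂]
  refine noncube_aux _ 1 (ne_zero_of_eval (c := 0) (by norm_num)) (by norm_num) ?_
  rw [show ((27:Polynomial ℂ)*(1-X^2)) = (X - C 1)*(-27*(X+1)) by rw [C_1]; ring]
  have h1 : ((-27:Polynomial ℂ)*(X+1)) ≠ 0 := ne_zero_of_eval (c := 1) (by norm_num)
  rw [rootMultiplicity_mul (mul_ne_zero (X_sub_C_ne_zero (1:ℂ)) h1),
    rootMultiplicity_X_sub_C_self,
    rootMultiplicity_eq_zero (by simp only [IsRoot]; norm_num)]

lemma c₁_irr : Irreducible ((X:Polynomial L)^3 - C u₁) :=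
  X_pow_sub_C_irreducible_of_prime Nat.prime_three u₁_noncube

lemma c₂_irr : Irreducible ((X:Polynomial L)^3 - C u₂) :=
  X_pow_sub_C_irreducible_of_prime Nat.prime_three u₂_noncube

def F₁ : Polynomial (Polynomial ℂ) := 16*X^3*(1 - X^3) + C (27*X^4*(X^2 - 1))

lemma F₁_map_w₀ : F₁.map ((Polynomial.aeval (R := ℂ) w₀).toRingHom : Polynomial ℂ →+* L) =
    (-16 : Polynomial L) * ((X^3 - C u₁) * (X^3 - C u₂)) := by
  rw [F₁]
  simp only [Polynomial.map_add, Polynomial.map_mul, Polynomial.map_pow, Polynomial.map_ofNat,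
    Polynomial.map_one, Polynomial.map_sub, Polynomial.map_X, Polynomial.map_C]
  have hval : ((Polynomial.aeval (R := ℂ) w₀).toRingHom : Polynomial ℂ →+* L) (27*X^4*(X^2 - 1))
      = 27*w₀^4*(w₀^2-1) := by
    simp only [AlgHom.toRingHom_eq_coe, RingHom.coe_coe, map_mul, map_pow, map_sub, map_one,
      map_ofNat, aeval_X]
  rw [hval]
  have hs' : (C u₁ + C u₂ : Polynomial L) = 1 := by rw [← map_add, hsum, map_one]
  have hp' : (C (27*w₀^4*(w₀^2-1)) : Polynomial L) = -16 * (C u₁ * C u₂) := by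
    rw [hprod]
    simp only [map_mul, map_neg, map_ofNat]
  linear_combination (-16*(X:Polynomial L)^3) * hs' + hp'

lemma hc12 : ¬ ((X:Polynomial L)^3 - C u₂ ∣ (X:Polynomial L)^3 - C u₁) := by
  rintro ⟨e, he⟩
  have h0 : ((X:Polynomial L)^3 - C u₁) ≠ 0 := X_pow_sub_C_ne_zero (by norm_num) _
  have h2 : ((X:Polynomial L)^3 - C u₂) ≠ 0 := X_pow_sub_C_ne_zero (by norm_num) _
  have he0 : e ≠ 0 := by rintro rfl; rw [mul_zero] at he; exact h0 he
  have hdeg : natDegree e = 0 := by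
    have := congrArg natDegree he
    rw [natDegree_X_pow_sub_C, natDegree_mul h2 he0, natDegree_X_pow_sub_C] at this
    omega
  rw [eq_C_of_natDegree_eq_zero hdeg] at he
  have h3 := congrArg (fun p => Polynomial.coeff p 3) he
  have h0' := congrArg (fun p => Polynomial.coeff p 0) he
  simp only [coeff_mul_C, coeff_sub, coeff_X_pow, coeff_C] at h3 h0'
  norm_num at h3 h0'
  rw [← h3, mul_one] at h0'
  exact u₁_ne_u₂ h0'

lemma key (u : L) (hu : ∀ k, φ k ≠ u) (g : Polynomial L)
    (hg0 : g ≠ 0) (hdeg : (g.map φ).natDegree = 3)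
    (hdvd : (X:Polynomial L)^3 - C u ∣ g.map φ) : False := by
  obtain ⟨m, hm⟩ := hdvd
  have hmap0 : g.map φ ≠ 0 := (Polynomial.map_ne_zero_iff φ.injective).mpr hg0
  have hm0 : m ≠ 0 := by rintro rfl; rw [mul_zero] at hm; exact hmap0 hm
  have hc : ((X:Polynomial L)^3 - C u) ≠ 0 := X_pow_sub_C_ne_zero (by norm_num) _
  have hdm : natDegree m = 0 := by
    have := congrArg natDegree hm
    rw [hdeg, natDegree_mul hc hm0, natDegree_X_pow_sub_C] at this
    omega
  rw [eq_C_of_natDegree_eq_zero hdm] at hm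
  have h3 := congrArg (fun p => Polynomial.coeff p 3) hm
  have h0 := congrArg (fun p => Polynomial.coeff p 0) hm
  simp only [coeff_mul_C, coeff_sub, coeff_X_pow, coeff_C, coeff_map] at h3 h0
  norm_num at h3 h0
  have hγ : m.coeff 0 ≠ 0 := by
    rintro h'
    rw [h'] at h3
    rw [eq_C_of_natDegree_eq_zero hdm, h'] at hm
    simp at hm
    exact hg0 hm
  apply hu (- g.coeff 0 / g.coeff 3)
  rw [map_div₀, map_neg, h0, h3]
  field_simp

lemma F₂_irr : Irreducible (F₁.map (aM)) := by
  have hG : (F₁.map aM).map φ = (-16 : Polynomial L) * ((X^3 - C u₁) * (X^3 - C u₂)) := by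
    rw [Polynomial.map_map, φ_comp, F₁_map_w₀]
  have hc1 : ((X:Polynomial L)^3 - C u₁) ≠ 0 := X_pow_sub_C_ne_zero (by norm_num) _
  have hc2 : ((X:Polynomial L)^3 - C u₂) ≠ 0 := X_pow_sub_C_ne_zero (by norm_num) _
  have h16 : (-16 : Polynomial L) = C (-16 : L) := by simp only [map_neg, map_ofNat]
  have h16ne : (-16 : L) ≠ 0 := by
    rw [show (-16:L) = aM (-16) by simp [map_ofNat]]
    exact aM_ne (by norm_num)
  have hG6 : ((F₁.map aM).map φ).natDegree = 6 := by
    rw [hG, h16, natDegree_C_mul h16ne, natDegree_mul hc1 hc2,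
      natDegree_X_pow_sub_C, natDegree_X_pow_sub_C]
  have h6 : (F₁.map aM).natDegree = 6 := by
    rwa [natDegree_map_eq_of_injective φ.injective] at hG6
  have hF0 : F₁.map aM ≠ 0 := by
    intro h0; rw [h0, natDegree_zero] at h6; exact absurd h6 (by norm_num)
  constructor
  · intro hunit
    have := natDegree_eq_zero_of_isUnit hunit
    omega
  intro g h hgh
  by_contra hcon
  push_neg at hcon
  obtain ⟨hgu, hhu⟩ := hcon
  have hg0 : g ≠ 0 := by rintro rfl; rw [zero_mul] at hgh; exact hF0 hgh
  have hh0 : h ≠ 0 := by rintro rfl; rw [mul_zero] at hgh; exact hF0 hgh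
  have hab : g.natDegree + h.natDegree = 6 := by rw [← natDegree_mul hg0 hh0, ← hgh, h6]
  have ha1 : g.natDegree ≠ 0 := by
    intro h0
    apply hgu
    rw [eq_C_of_natDegree_eq_zero h0]
    exact isUnit_C.mpr (Ne.isUnit (fun hc => hg0 (by rw [eq_C_of_natDegree_eq_zero h0, hc, map_zero])))
  have hb1 : h.natDegree ≠ 0 := by
    intro h0
    apply hhu
    rw [eq_C_of_natDegree_eq_zero h0]
    exact isUnit_C.mpr (Ne.isUnit (fun hc => hh0 (by rw [eq_C_of_natDegree_eq_zero h0, hc, map_zero])))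
  have hGmap0 : g.map φ ≠ 0 := (Polynomial.map_ne_zero_iff φ.injective).mpr hg0
  have hHmap0 : h.map φ ≠ 0 := (Polynomial.map_ne_zero_iff φ.injective).mpr hh0
  have hGH : (g.map φ) * (h.map φ) = (-16 : Polynomial L) * ((X^3 - C u₁) * (X^3 - C u₂)) := by
    rw [← Polynomial.map_mul, ← hgh, hG]
  have hp1 : Prime ((X:Polynomial L)^3 - C u₁) := c₁_irr.prime
  have hp2 : Prime ((X:Polynomial L)^3 - C u₂) := c₂_irr.prime
  have hd1 : ((X:Polynomial L)^3 - C u₁) ∣ (g.map φ) ∨ ((X:Polynomial L)^3 - C u₁) ∣ (h.map φ) := by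
    apply hp1.2.2
    exact ⟨(-16) * (X^3 - C u₂), by rw [hGH]; ring⟩
  have hd2 : ((X:Polynomial L)^3 - C u₂) ∣ (g.map φ) ∨ ((X:Polynomial L)^3 - C u₂) ∣ (h.map φ) := by
    apply hp2.2.2
    exact ⟨(-16) * (X^3 - C u₁), by rw [hGH]; ring⟩
  have hdegG : (g.map φ).natDegree = g.natDegree := natDegree_map_eq_of_injective φ.injective g
  have hdegH : (h.map φ).natDegree = h.natDegree := natDegree_map_eq_of_injective φ.injective h
  -- if both cubics divide the same factor, its degree is ≥ 6
  have both : ∀ p : Polynomial L, p ≠ 0 →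
      ((X:Polynomial L)^3 - C u₁) ∣ p → ((X:Polynomial L)^3 - C u₂) ∣ p → 6 ≤ p.natDegree := by
    intro p hp0 ⟨m, hm⟩ h2'
    rcases hp2.2.2 _ m (hm ▸ h2') with hcc | hcc
    · exact absurd hcc hc12
    · obtain ⟨m', hm'⟩ := hcc
      have : ((X:Polynomial L)^3 - C u₁) * ((X:Polynomial L)^3 - C u₂) ∣ p :=
        ⟨m', by rw [hm, hm']; ring⟩
      have hle := natDegree_le_of_dvd this hp0
      rwa [natDegree_mul hc1 hc2, natDegree_X_pow_sub_C, natDegree_X_pow_sub_C] at hle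
  rcases hd1 with h1 | h1 <;> rcases hd2 with h2 | h2
  · have := both _ hGmap0 h1 h2
    rw [hdegG] at this; omega
  · -- c₁ ∣ G, c₂ ∣ H : degrees both 3
    have e1 := natDegree_le_of_dvd h1 hGmap0
    have e2 := natDegree_le_of_dvd h2 hHmap0
    rw [natDegree_X_pow_sub_C, hdegG] at e1
    rw [natDegree_X_pow_sub_C, hdegH] at e2
    exact key u₁ u₁_not_range g hg0 (by omega) h1
  · have e1 := natDegree_le_of_dvd h1 hHmap0
    have e2 := natDegree_le_of_dvd h2 hGmap0
    rw [natDegree_X_pow_sub_C, hdegH] at e1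
    rw [natDegree_X_pow_sub_C, hdegG] at e2
    exact key u₂ u₂_not_range g hg0 (by omega) h2
  · have := both _ hHmap0 h1 h2
    rw [hdegH] at this; omega

lemma F₁_prim : F₁.IsPrimitive := by
  intro r hr
  have hF' : F₁ = C (27*X^4*(X^2-1)) + C 16*X^3 - C 16*X^6 := by
    rw [F₁, show (C (16:Polynomial ℂ) : Polynomial (Polynomial ℂ)) = 16 by simp [map_ofNat]]
    ring
  have hco : F₁.coeff 6 = -16 := by
    rw [hF']
    simp only [coeff_sub, coeff_add, coeff_C_mul, coeff_X_pow, coeff_C]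
    norm_num
  have hdvd := (C_dvd_iff_dvd_coeff r F₁).mp hr 6
  rw [hco] at hdvd
  refine isUnit_of_dvd_unit hdvd ?_
  rw [show ((-16:Polynomial ℂ)) = C (-16) by simp [map_ofNat]]
  exact isUnit_C.mpr (by norm_num : (-16:ℂ) ≠ 0).isUnit

lemma F₁_irr : Irreducible F₁ :=
  F₁_prim.irreducible_of_irreducible_map_of_injective (RatFunc.algebraMap_injective ℂ) F₂_irr

def E : MvPolynomial (Fin 2) ℂ ≃ₐ[ℂ] Polynomial (Polynomial ℂ) :=
  (MvPolynomial.finSuccEquiv ℂ 1).trans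
    (Polynomial.mapAlgEquiv ((MvPolynomial.finSuccEquiv ℂ 0).trans
      (Polynomial.mapAlgEquiv (MvPolynomial.isEmptyAlgEquiv ℂ (Fin 0)))))

lemma E_X0 : E (MvPolynomial.X 0) = Polynomial.X := by
  simp [E, MvPolynomial.finSuccEquiv_X_zero]

lemma E_X1 : E (MvPolynomial.X 1) = Polynomial.C Polynomial.X := by
  have h1 : (MvPolynomial.finSuccEquiv ℂ 1) (MvPolynomial.X 1) = Polynomial.C (MvPolynomial.X 0) := by
    rw [show (MvPolynomial.X 1 : MvPolynomial (Fin 2) ℂ) = MvPolynomial.X (Fin.succ 0) from rfl]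
    exact MvPolynomial.finSuccEquiv_X_succ
  simp [E, h1, MvPolynomial.finSuccEquiv_X_zero]

end Stmt19Aux
end

open Stmt19Aux in
theorem stmt_19 :
    Irreducible (16 * (MvPolynomial.X 0) ^ 3 * (1 - (MvPolynomial.X 0) ^ 3) +
      27 * (MvPolynomial.X 1) ^ 4 * ((MvPolynomial.X 1) ^ 2 - 1) :
      MvPolynomial (Fin 2) ℂ) := by
  have hE : E (16 * (MvPolynomial.X 0) ^ 3 * (1 - (MvPolynomial.X 0) ^ 3) +
      27 * (MvPolynomial.X 1) ^ 4 * ((MvPolynomial.X 1) ^ 2 - 1)) = F₁ := by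
    rw [F₁]
    rw [show (C (27*X^4*(X^2-1)) : Polynomial (Polynomial ℂ))
      = 27 * (C X)^4 * ((C X)^2 - 1) by simp [map_mul, map_pow, map_sub, map_one, map_ofNat]]
    simp only [map_add, map_mul, map_pow, map_sub, map_one, map_ofNat, E_X0, E_X1]
  exact (MulEquiv.irreducible_iff E).mp (by rw [hE]; exact F₁_irr)
end
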